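/- arXiv:1202.1336 — 2 statements merged into one kernel-verified Lean document; each statement's English description precedes it below -/
import Mathlib

section
/- (Normal Graph Duality for tail-biting trellises, behavior-level statement) Let T be a tail-biting trellis with constraint codes C_i ⊆ S_i × A_i × S_{i+1} and behavior B ⊆ A × S, and let T° be the dual trellis with constraint codes C_i^⊥ (using the pairing with sign inversion on outgoing states) and behavior B° ⊆ A* × S*. Then the projection of B° onto A* equals the orthogonal complement in A* of the projection of B onto A; i.e., T° realizes the dual code C^⊥. -/
open Module

/-- The behavior of a tail-biting trellis realization with state spaces `S i`, symbol
spaces `A i` (`i ∈ ℤ/m`), and constraint codes `C i ⊆ S i × A i × S (i+1)`: the subspace of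
all pairs `(a, s)` of symbol/state sequences satisfying all local constraints. -/
def trellisBehavior {F : Type*} [Field F] {m : ℕ} (S A : ZMod m → Type*)
    [∀ i, AddCommGroup (S i)] [∀ i, Module F (S i)]
    [∀ i, AddCommGroup (A i)] [∀ i, Module F (A i)]
    (C : ∀ i, Submodule F (S i × A i × S (i + 1))) :
    Submodule F ((∀ i, A i) × (∀ i, S i)) where
  carrier := {p | ∀ i, (p.2 i, p.1 i, p.2 (i + 1)) ∈ C i}
  zero_mem' := by intro i; exact (C i).zero_mem
  add_mem' := by intro p q hp hq i; exact (C i).add_mem (hp i) (hq i)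
  smul_mem' := by intro r p hp i; exact (C i).smul_mem r (hp i)

/-- The orthogonal complement of a constraint code `C ⊆ S1 × A × S2`, taken inside
`S1* × A* × S2*` with respect to the pairing with sign inversion on the outgoing state:
`⟨(s,a,t),(σ,α,τ)⟩ = σ(s) + α(a) − τ(t)`. -/
def constraintPerp {F S1 A S2 : Type*} [Field F]
    [AddCommGroup S1] [Module F S1] [AddCommGroup A] [Module F A]
    [AddCommGroup S2] [Module F S2] (C : Submodule F (S1 × A × S2)) :
    Submodule F (Module.Dual F S1 × Module.Dual F A × Module.Dual F S2) where
  carrier := {d | ∀ x ∈ C, d.1 x.1 + d.2.1 x.2.1 - d.2.2 x.2.2 = 0}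
  zero_mem' := by intro x hx; simp
  add_mem' := by
    intro a b ha hb x hx
    have h1 := ha x hx
    have h2 := hb x hx
    simp only [Prod.fst_add, Prod.snd_add, LinearMap.add_apply]
    linear_combination h1 + h2
  smul_mem' := by
    intro r a ha x hx
    have h1 := ha x hx
    simp only [Prod.smul_fst, Prod.smul_snd, LinearMap.smul_apply, smul_eq_mul]
    linear_combination r * h1

/-- Normal Graph Duality for tail-biting trellises (behavior-level statement): the projection
onto the dual symbol sequence space of the behavior of the dual trellis (whose constraint
codes are the `C i ^⊥`, with sign inversion on outgoing dual states) equals the orthogonal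
complement of the projection onto the symbol sequence space of the behavior of the primal
trellis; i.e., the dual trellis realizes the dual code `C^⊥`. -/
theorem normal_graph_duality
    {F : Type*} [Field F] [Fintype F] {m : ℕ} [NeZero m]
    (S A : ZMod m → Type*)
    [∀ i, AddCommGroup (S i)] [∀ i, Module F (S i)] [∀ i, FiniteDimensional F (S i)]
    [∀ i, AddCommGroup (A i)] [∀ i, Module F (A i)] [∀ i, FiniteDimensional F (A i)]
    (C : ∀ i, Submodule F (S i × A i × S (i + 1))) :
    ∀ α : ∀ i, Dual F (A i),
      (∃ σ : ∀ i, Dual F (S i),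
          (α, σ) ∈ trellisBehavior (fun i => Dual F (S i)) (fun i => Dual F (A i))
            (fun i => constraintPerp (C i))) ↔
        (∀ a : ∀ i, A i, (∃ s, (a, s) ∈ trellisBehavior S A C) →
          ∑ i, α i (a i) = 0) := by
  intro α
  constructor
  · rintro ⟨σ, hσ⟩ a ⟨s, hs⟩
    have key : ∀ i, σ i (s i) + α i (a i) - σ (i + 1) (s (i + 1)) = 0 :=
      fun i => hσ i _ (hs i)
    have h0 : ∑ i, (σ i (s i) + α i (a i) - σ (i + 1) (s (i + 1))) = (0 : F) := by
      simp [key]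
    have h1 : ∑ i : ZMod m, σ (i + 1) (s (i + 1)) = ∑ i : ZMod m, σ i (s i) :=
      Fintype.sum_equiv (Equiv.addRight (1 : ZMod m))
        (fun i => σ (i + 1) (s (i + 1))) (fun i => σ i (s i)) (fun i => rfl)
    rw [Finset.sum_sub_distrib, Finset.sum_add_distrib, h1] at h0
    linear_combination h0
  · intro hcode
    classical
    -- the "global constraint" map
    let Ψ : ((∀ i, A i) × (∀ i, S i)) →ₗ[F] (∀ i, S i × A i × S (i + 1)) :=
      { toFun := fun p i => (p.2 i, p.1 i, p.2 (i + 1))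
        map_add' := fun p q => rfl
        map_smul' := fun r p => rfl }
    let D : Submodule F (∀ i, S i × A i × S (i + 1)) := Submodule.pi Set.univ C
    let L : ((∀ i, A i) × (∀ i, S i)) →ₗ[F] ((∀ i, S i × A i × S (i + 1)) ⧸ D) :=
      D.mkQ.comp Ψ
    -- the global functional determined by α
    let h : ((∀ i, A i) × (∀ i, S i)) →ₗ[F] F :=
      { toFun := fun p => ∑ i, α i (p.1 i)
        map_add' := fun p q => by simp [Finset.sum_add_distrib]
        map_smul' := fun r p => by simp [Finset.mul_sum] }
    have hmem : h ∈ (LinearMap.ker L).dualAnnihilator := by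
      rw [Submodule.mem_dualAnnihilator]
      intro p hp
      have hp' : Ψ p ∈ D := by
        have : L p = 0 := hp
        have h2 : D.mkQ (Ψ p) = 0 := this
        rwa [Submodule.mkQ_apply, Submodule.Quotient.mk_eq_zero] at h2
      exact hcode p.1 ⟨p.2, fun i => hp' i (Set.mem_univ i)⟩
    rw [← LinearMap.range_dualMap_eq_dualAnnihilator_ker] at hmem
    obtain ⟨gbar, hg⟩ := hmem
    -- the functional on the product of local spaces
    set g : (∀ i, S i × A i × S (i + 1)) →ₗ[F] F := gbar.comp D.mkQ with hgdef
    have gD : ∀ w ∈ D, g w = 0 := by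
      intro w hw
      have h2 : D.mkQ w = 0 := by
        rw [Submodule.mkQ_apply]
        exact (Submodule.Quotient.mk_eq_zero D).mpr hw
      show gbar (D.mkQ w) = 0
      rw [h2, map_zero]
    have gΨ : ∀ p, g (Ψ p) = ∑ i, α i (p.1 i) := by
      intro p
      have h1 := LinearMap.congr_fun hg p
      rw [LinearMap.dualMap_apply] at h1
      exact h1
    -- the dual state functionals
    let σ : ∀ i, Dual F (S i) := fun i =>
      g.comp ((LinearMap.single F (fun j => S j × A j × S (j + 1)) i).comp
        (LinearMap.inl F (S i) (A i × S (i + 1))))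
    have hσ_apply : ∀ i (t : S i), σ i t = g (Pi.single i (t, 0, 0)) := fun i t => rfl
    -- the α-part identity: summing the symbol-slot singles recovers h
    have hβ : ∀ (a : ∀ i, A i),
        ∑ k : ZMod m, g (Pi.single k ((0 : S k), a k, (0 : S (k + 1)))) = ∑ k : ZMod m, α k (a k) := by
      intro a
      rw [← map_sum]
      have e : (∑ k : ZMod m, Pi.single k ((0 : S k), a k, (0 : S (k + 1)))) = Ψ (a, 0) := by
        rw [Finset.univ_sum_single (fun k => ((0 : S k), a k, (0 : S (k + 1))))]
        rfl
      rw [e, gΨ]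
    -- the state-part identity
    have hτ : ∀ (s : ∀ i, S i),
        (∑ k : ZMod m, (g (Pi.single k (s k, (0 : A k), (0 : S (k + 1)))) +
          g (Pi.single k ((0 : S k), (0 : A k), s (k + 1))))) = 0 := by
      intro s
      have hsum : (∑ k : ZMod m, (Pi.single k (s k, (0 : A k), (0 : S (k + 1))) +
          Pi.single k ((0 : S k), (0 : A k), s (k + 1)))) = Ψ (0, s) := by
        rw [Finset.sum_add_distrib,
          Finset.univ_sum_single (fun k => (s k, (0 : A k), (0 : S (k + 1)))),
          Finset.univ_sum_single (fun k => ((0 : S k), (0 : A k), s (k + 1)))]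
        funext j
        show (s j, (0 : A j), (0 : S (j + 1))) + ((0 : S j), (0 : A j), s (j + 1)) =
          (s j, (0 : A j), s (j + 1))
        simp [Prod.ext_iff]
      calc (∑ k : ZMod m, (g (Pi.single k (s k, (0 : A k), (0 : S (k + 1)))) +
              g (Pi.single k ((0 : S k), (0 : A k), s (k + 1)))))
          = g (∑ k : ZMod m, (Pi.single k (s k, (0 : A k), (0 : S (k + 1))) +
              Pi.single k ((0 : S k), (0 : A k), s (k + 1)))) := by
            rw [map_sum]
            exact Finset.sum_congr rfl (fun k _ => (map_add g _ _).symm)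
        _ = g (Ψ (0, s)) := by rw [hsum]
        _ = 0 := by rw [gΨ]; simp
    have main : ∀ i, ∀ x ∈ C i,
        σ i x.1 + α i x.2.1 - σ (i + 1) x.2.2 = 0 := by
      intro i x hx
      -- g vanishes on the single at i of x
      have hx0 : g (Pi.single i x) = 0 := by
        apply gD
        intro j _
        rcases eq_or_ne j i with rfl | hj
        · rwa [Pi.single_eq_same]
        · rw [Pi.single_eq_of_ne hj]; exact (C j).zero_mem
      -- decompose x into its three slots
      have hxsplit : x = (x.1, (0 : A i), (0 : S (i + 1))) +
          (((0 : S i), x.2.1, (0 : S (i + 1))) + ((0 : S i), (0 : A i), x.2.2)) := by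
        simp [Prod.ext_iff]
      have hxdec : g (Pi.single i x) = g (Pi.single i (x.1, (0 : A i), (0 : S (i + 1)))) +
          (g (Pi.single i ((0 : S i), x.2.1, (0 : S (i + 1)))) +
           g (Pi.single i ((0 : S i), (0 : A i), x.2.2))) := by
        rw [← map_add, ← map_add, ← Pi.single_add, ← Pi.single_add, ← hxsplit]
      -- identify the middle slot with α
      have hmid : g (Pi.single i ((0 : S i), x.2.1, (0 : S (i + 1)))) = α i x.2.1 := by
        have key := hβ (Pi.single i x.2.1)
        have e1 : ∑ k : ZMod m, g (Pi.single k ((0 : S k), Pi.single i x.2.1 k, (0 : S (k + 1)))) =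
            g (Pi.single i ((0 : S i), Pi.single i x.2.1 i, (0 : S (i + 1)))) := by
          apply Finset.sum_eq_single_of_mem i (Finset.mem_univ i)
          intro j _ hj
          rw [Pi.single_eq_of_ne hj,
            show ((0 : S j), (0 : A j), (0 : S (j + 1))) =
              (0 : S j × A j × S (j + 1)) from rfl, Pi.single_zero, map_zero]
        have e2 : ∑ k : ZMod m, α k (Pi.single i x.2.1 k) = α i (Pi.single i x.2.1 i) := by
          apply Finset.sum_eq_single_of_mem i (Finset.mem_univ i)
          intro j _ hj
          rw [Pi.single_eq_of_ne hj, map_zero]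
        rw [e1, e2, Pi.single_eq_same] at key
        exact key
      -- identify the last slot with -σ (i+1)
      have hlast : g (Pi.single i ((0 : S i), (0 : A i), x.2.2)) = - σ (i + 1) x.2.2 := by
        have key := hτ (Pi.single (i + 1) x.2.2)
        rw [Finset.sum_add_distrib] at key
        have e1 : ∑ k : ZMod m, g (Pi.single k
              (Pi.single (i + 1) x.2.2 k, (0 : A k), (0 : S (k + 1)))) =
            g (Pi.single (i + 1)
              (Pi.single (i + 1) x.2.2 (i + 1), (0 : A (i + 1)), (0 : S (i + 1 + 1)))) := by
          apply Finset.sum_eq_single_of_mem (i + 1) (Finset.mem_univ _)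
          intro j _ hj
          rw [Pi.single_eq_of_ne hj,
            show ((0 : S j), (0 : A j), (0 : S (j + 1))) =
              (0 : S j × A j × S (j + 1)) from rfl, Pi.single_zero, map_zero]
        have e2 : ∑ k : ZMod m, g (Pi.single k
              ((0 : S k), (0 : A k), Pi.single (i + 1) x.2.2 (k + 1))) =
            g (Pi.single i ((0 : S i), (0 : A i), Pi.single (i + 1) x.2.2 (i + 1))) := by
          apply Finset.sum_eq_single_of_mem i (Finset.mem_univ i)
          intro j _ hj
          rw [Pi.single_eq_of_ne (fun hc : j + 1 = i + 1 => hj (add_right_cancel hc)),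
            show ((0 : S j), (0 : A j), (0 : S (j + 1))) =
              (0 : S j × A j × S (j + 1)) from rfl, Pi.single_zero, map_zero]
        rw [e1, e2, Pi.single_eq_same] at key
        rw [hσ_apply]
        linear_combination key
      rw [hx0] at hxdec
      rw [hmid, hlast] at hxdec
      rw [hσ_apply i x.1]
      linear_combination -hxdec
    exact ⟨σ, main⟩
end

section
/- Let C ⊆ S_1 × A × S_2 be a constraint code and let C' ⊆ S_1 × A × S_2' be the trimmed-and-truncated version arising from trimming S_2 to a subspace Y ⊆ S_2: C' = {(s_1, a, s_2) ∈ C : s_2 ∈ Y}. Then under the pairing with sign inversion on the outgoing state, (C')^⊥ ⊆ S_1* × A* × Y* equals the image of C^⊥ under the map id × id × r, where r: S_2* → Y* is restriction of functionals; i.e., trimming a state space to Y dualizes to merging the dual state space to S_2*/Y^⊥ ≅ Y*. -/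
open Module

/-! For any linear map `f : V → W` of vector spaces, the annihilator of `f⁻¹(U)` is the image of
`U⁰` under `f*`, because a functional on `V ⧸ f⁻¹(U) ↪ W ⧸ U` extends to `W ⧸ U`. Under the signed pairing, which identifies
`S1* × A* × S2*` with `(S1 × A × S2)*` naturally in `S2`, trimming along `Y ↪ S2` therefore
dualizes to restriction `S2* → Y*`. -/

theorem Submodule.dualAnnihilator_comap {K V W : Type*} [Field K] [AddCommGroup V] [Module K V]
    [AddCommGroup W] [Module K W] (U : Submodule K W) (f : V →ₗ[K] W) :
    (U.comap f).dualAnnihilator = U.dualAnnihilator.map f.dualMap := by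
  rw [← U.ker_mkQ, ← LinearMap.ker_comp, ← LinearMap.range_dualMap_eq_dualAnnihilator_ker,
    ← LinearMap.dualMap_comp_dualMap, LinearMap.range_comp, U.ker_mkQ, U.range_dualMap_mkQ_eq]

section SignedPairing

variable {F S1 A S2 S2' : Type*} [Field F]
  [AddCommGroup S1] [Module F S1] [AddCommGroup A] [Module F A]
  [AddCommGroup S2] [Module F S2] [AddCommGroup S2'] [Module F S2']

variable (F S1 A S2) in
def signedPairingEquiv : (Dual F S1 × Dual F A × Dual F S2) ≃ₗ[F] Dual F (S1 × A × S2) :=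
  ((LinearEquiv.refl F _).prodCongr
      (((LinearEquiv.refl F _).prodCongr (LinearEquiv.neg F)).trans
        (dualProdDualEquivDual F A S2))).trans
    (dualProdDualEquivDual F S1 (A × S2))

@[simp]
theorem signedPairingEquiv_apply (d : Dual F S1 × Dual F A × Dual F S2) (x : S1 × A × S2) :
    signedPairingEquiv F S1 A S2 d x = d.1 x.1 + d.2.1 x.2.1 - d.2.2 x.2.2 := by
  simp [signedPairingEquiv, sub_eq_add_neg, add_assoc]

theorem constraintPerp_eq_comap (C : Submodule F (S1 × A × S2)) :
    constraintPerp C = C.dualAnnihilator.comap (signedPairingEquiv F S1 A S2).toLinearMap := by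
  ext d
  simp [constraintPerp, Submodule.mem_dualAnnihilator]

theorem signedPairingEquiv_comp_prodMap_dualMap (g : S2' →ₗ[F] S2) :
    (signedPairingEquiv F S1 A S2').toLinearMap ∘ₗ
        LinearMap.id.prodMap (LinearMap.id.prodMap g.dualMap) =
      (LinearMap.id.prodMap (LinearMap.id.prodMap g)).dualMap ∘ₗ
        (signedPairingEquiv F S1 A S2).toLinearMap := by
  refine LinearMap.ext fun d => LinearMap.ext fun x => ?_
  simp

theorem constraintPerp_comap_prodMap (C : Submodule F (S1 × A × S2)) (g : S2' →ₗ[F] S2) :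
    constraintPerp (C.comap (LinearMap.id.prodMap (LinearMap.id.prodMap g))) =
      (constraintPerp C).map (LinearMap.id.prodMap (LinearMap.id.prodMap g.dualMap)) := by
  set e := (signedPairingEquiv F S1 A S2).toLinearMap
  set e' := (signedPairingEquiv F S1 A S2').toLinearMap
  calc _ = (((C.dualAnnihilator.comap e).map e).map
          (LinearMap.id.prodMap (LinearMap.id.prodMap g)).dualMap).comap e' := by
        rw [constraintPerp_eq_comap, Submodule.dualAnnihilator_comap,
          Submodule.map_comap_eq_of_surjective (signedPairingEquiv F S1 A S2).surjective]
    _ = (((constraintPerp C).map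
          (LinearMap.id.prodMap (LinearMap.id.prodMap g.dualMap))).map e').comap e' := by
        rw [constraintPerp_eq_comap, ← Submodule.map_comp, ← Submodule.map_comp,
          signedPairingEquiv_comp_prodMap_dualMap]
    _ = _ := Submodule.comap_map_eq_of_injective (signedPairingEquiv F S1 A S2').injective _

end SignedPairing

theorem trim_dualizes_to_merge_general
    {F S1 A S2 : Type*} [Field F]
    [AddCommGroup S1] [Module F S1] [AddCommGroup A] [Module F A]
    [AddCommGroup S2] [Module F S2]
    (C : Submodule F (S1 × A × S2)) (Y : Submodule F S2) :
    constraintPerp (Submodule.comap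
        ((LinearMap.id : S1 →ₗ[F] S1).prodMap
          ((LinearMap.id : A →ₗ[F] A).prodMap Y.subtype)) C) =
      Submodule.map
        ((LinearMap.id : Dual F S1 →ₗ[F] Dual F S1).prodMap
          ((LinearMap.id : Dual F A →ₗ[F] Dual F A).prodMap Y.subtype.dualMap))
        (constraintPerp C) := constraintPerp_comap_prodMap C Y.subtype

/-- Trimming dualizes to merging: let `C ⊆ S1 × A × S2` be a constraint code and let
`C' ⊆ S1 × A × Y` be the result of trimming the state space `S2` to a subspace `Y`
(i.e. `C' = {(s1,a,s2) ∈ C : s2 ∈ Y}`, viewed inside `S1 × A × Y`). Then, under the pairing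
with sign inversion on the outgoing state, `(C')^⊥ ⊆ S1* × A* × Y*` equals the image of
`C^⊥` under `id × id × r`, where `r : S2* → Y*` is restriction of functionals (so that
trimming to `Y` dualizes to merging the dual state space to `S2*/Y^⊥ ≅ Y*`). -/
theorem trim_dualizes_to_merge
    {F S1 A S2 : Type*} [Field F]
    [AddCommGroup S1] [Module F S1] [AddCommGroup A] [Module F A]
    [AddCommGroup S2] [Module F S2] [FiniteDimensional F S1]
    [FiniteDimensional F A] [FiniteDimensional F S2]
    (C : Submodule F (S1 × A × S2)) (Y : Submodule F S2) :
    constraintPerp (Submodule.comap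
        ((LinearMap.id : S1 →ₗ[F] S1).prodMap
          ((LinearMap.id : A →ₗ[F] A).prodMap Y.subtype)) C) =
      Submodule.map
        ((LinearMap.id : Dual F S1 →ₗ[F] Dual F S1).prodMap
          ((LinearMap.id : Dual F A →ₗ[F] Dual F A).prodMap Y.subtype.dualMap))
        (constraintPerp C) :=
  trim_dualizes_to_merge_general C Y
end
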